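/- arXiv:2205.09201 — 2 statements merged into one kernel-verified Lean document; each statement's English description precedes it below -/
import Mathlib

section
/- Let P = (D_A, D_B, Φ, A) be an MBSD instance with point-wise mapping specification Φ = ⋀_{i=1}^k □(φ_i → ψ_i), where each φ_i is a Boolean formula over Prop^A and each ψ_i is a Boolean formula over Prop^B, and stop agent A. Let G_P = (𝒜, Safe(g)) be the safety game with arena 𝒜 given by U = V = S × T, u0 = (s0, t0), α = {((s,t),(s',t)) : (s,s') ∈ δ^A}, β = {((s,t),(s,t')) : (t,t') ∈ δ^B}, and g = {(s,t) ∈ U : λ^A(s) ∪ λ^B(t) ⊨ ⋀_{i=1}^k (φ_i → ψ_i)}. Then P has a solution if and only if Player 2 has a winning strategy in G_P. -/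
/-! ### Boolean formulas -/

inductive BForm (P : Type) : Type
  | tt : BForm P
  | atom : P → BForm P
  | neg : BForm P → BForm P
  | conj : BForm P → BForm P → BForm P

namespace BForm

/-- Satisfaction of a Boolean formula by the set `X` of true propositions. -/
def sat {P : Type} (X : Set P) : BForm P → Prop
  | .tt => True
  | .atom p => p ∈ X
  | .neg φ => ¬ sat X φ
  | .conj φ ψ => sat X φ ∧ sat X ψ

def imp {P : Type} (φ ψ : BForm P) : BForm P := .neg (.conj φ (.neg ψ))

def map {P Q : Type} (f : P → Q) : BForm P → BForm Q
  | .tt => .tt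
  | .atom p => .atom (f p)
  | .neg φ => .neg (map f φ)
  | .conj φ ψ => .conj (map f φ) (map f ψ)

end BForm

/-! ### LTLf formulas and finite-word semantics -/

inductive LTLf (P : Type) : Type
  | tt : LTLf P
  | atom : P → LTLf P
  | neg : LTLf P → LTLf P
  | conj : LTLf P → LTLf P → LTLf P
  | next : LTLf P → LTLf P
  | untl : LTLf P → LTLf P → LTLf P

namespace LTLf

/-- Satisfaction on the finite word `π 0, …, π n` at position `i`. -/
def sat {P : Type} (π : ℕ → Set P) (n : ℕ) : ℕ → LTLf P → Prop
  | _, .tt => True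
  | i, .atom p => p ∈ π i
  | i, .neg φ => ¬ sat π n i φ
  | i, .conj φ ψ => sat π n i φ ∧ sat π n i ψ
  | i, .next φ => i + 1 ≤ n ∧ sat π n (i + 1) φ
  | i, .untl φ ψ => ∃ j, i ≤ j ∧ j ≤ n ∧ sat π n j ψ ∧ ∀ m, i ≤ m → m < j → sat π n m φ

def disj {P : Type} (φ ψ : LTLf P) : LTLf P := .neg (.conj (.neg φ) (.neg ψ))
def imp {P : Type} (φ ψ : LTLf P) : LTLf P := disj (.neg φ) ψ
def ev {P : Type} (φ : LTLf P) : LTLf P := .untl .tt φ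
def always {P : Type} (φ : LTLf P) : LTLf P := .neg (ev (.neg φ))
/-- Finite conjunction `⋀_{i=1}^k f i`. -/
def iconj {P : Type} {k : ℕ} (f : Fin k → LTLf P) : LTLf P :=
  ((List.finRange k).map f).foldr .conj .tt

end LTLf

def BForm.toLTLf {P : Type} : BForm P → LTLf P
  | .tt => .tt
  | .atom p => .atom p
  | .neg φ => .neg φ.toLTLf
  | .conj φ ψ => .conj φ.toLTLf ψ.toLTLf

/-! ### Dynamic domains, traces, strategies, solutions -/

structure DynDom (P S : Type) where
  init : S
  δ : S → S → Prop
  label : S → Set P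

/-- `τ 0 … τ n` is a (finite) trace of `D`. -/
def IsTrace {P S : Type} (D : DynDom P S) (τ : ℕ → S) (n : ℕ) : Prop :=
  τ 0 = D.init ∧ ∀ i, i < n → D.δ (τ i) (τ (i + 1))

def IsInfTrace {P S : Type} (D : DynDom P S) (τ : ℕ → S) : Prop :=
  τ 0 = D.init ∧ ∀ i, D.δ (τ i) (τ (i + 1))

/-- The prefix `τ 0 … τ j` as a list. -/
def pref {S : Type} (τ : ℕ → S) (j : ℕ) : List S := (List.range (j + 1)).map τ

/-- The trace induced by a strategy `σ : S⁺ → T` on a trace of the `A`-domain. -/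
def induced {S T : Type} (σ : List S → T) (τ : ℕ → S) : ℕ → T := fun i => σ (pref τ i)

def Executable {PA PB S T : Type} (DA : DynDom PA S) (DB : DynDom PB T)
    (σ : List S → T) : Prop :=
  σ [DA.init] = DB.init ∧ ∀ τ n, IsTrace DA τ n → IsTrace DB (induced σ τ) n

/-- Joint label of a pair of label sets, over the disjoint union of the propositions. -/
def jset {PA PB : Type} (XA : Set PA) (XB : Set PB) : Set (PA ⊕ PB) :=
  Sum.inl '' XA ∪ Sum.inr '' XB

/-- Joint trace label of two (equally long) traces. -/
def jointLabel {PA PB S T : Type} (lA : S → Set PA) (lB : T → Set PB)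
    (τ : ℕ → S) (τ' : ℕ → T) : ℕ → Set (PA ⊕ PB) :=
  fun i => jset (lA (τ i)) (lB (τ' i))

/-- Solution when the stop agent is `A`. -/
def IsSolutionA {PA PB S T : Type} (DA : DynDom PA S) (DB : DynDom PB T)
    (Φ : LTLf (PA ⊕ PB)) (σ : List S → T) : Prop :=
  Executable DA DB σ ∧ ∀ τ n, IsTrace DA τ n →
    LTLf.sat (jointLabel DA.label DB.label τ (induced σ τ)) n 0 Φ

/-- Solution when the stop agent is `B`. -/
def IsSolutionB {PA PB S T : Type} (DA : DynDom PA S) (DB : DynDom PB T)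
    (Φ : LTLf (PA ⊕ PB)) (σ : List S → T) : Prop :=
  Executable DA DB σ ∧ ∀ τ, IsInfTrace DA τ → ∃ n,
    LTLf.sat (jointLabel DA.label DB.label τ (induced σ τ)) n 0 Φ

/-! ### Two-player games -/

structure Arena (N : Type) where
  u0 : N
  alpha : N → N → Prop
  beta : N → N → Prop

def IsPrePlay {N : Type} (A : Arena N) (ρ : ℕ → N) (n : ℕ) : Prop :=
  ρ 0 = A.u0 ∧ ∀ i, i < n →
    (Even i → A.alpha (ρ i) (ρ (i + 1))) ∧ (¬ Even i → A.beta (ρ i) (ρ (i + 1)))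

/-- A play `ρ 0 … ρ n` (with `n` even, ending in a `P1` node). -/
def IsPlay {N : Type} (A : Arena N) (ρ : ℕ → N) (n : ℕ) : Prop :=
  Even n ∧ IsPrePlay A ρ n

/-- The `P2` (V-) nodes of the prefix `ρ 0 … ρ i`, i.e. `ρ 1, ρ 3, …`. -/
def vlist {N : Type} (ρ : ℕ → N) (i : ℕ) : List N :=
  (List.range ((i + 1) / 2)).map fun j => ρ (2 * j + 1)

def Compatible {N : Type} (A : Arena N) (σ' : List N → N) (ρ : ℕ → N) (n : ℕ) : Prop :=
  ∀ i, i < n → ¬ Even i → ρ (i + 1) = σ' (vlist ρ i)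

/-- A `P2` strategy only prescribes legal moves (along plays compatible with it). -/
def StratLegal {N : Type} (A : Arena N) (σ' : List N → N) : Prop :=
  ∀ ρ n, ¬ Even n → IsPrePlay A ρ n → Compatible A σ' ρ n →
    A.beta (ρ n) (σ' (vlist ρ n))

def IsInfPlay {N : Type} (A : Arena N) (ρ : ℕ → N) : Prop :=
  ρ 0 = A.u0 ∧ ∀ i,
    (Even i → A.alpha (ρ i) (ρ (i + 1))) ∧ (¬ Even i → A.beta (ρ i) (ρ (i + 1)))

def CompatibleInf {N : Type} (A : Arena N) (σ' : List N → N) (ρ : ℕ → N) : Prop :=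
  ∀ i, ¬ Even i → ρ (i + 1) = σ' (vlist ρ i)

/-- Winning strategy for the safety objective `Safe(g)`. -/
def WinningSafe {N : Type} (A : Arena N) (g : Set N) (σ' : List N → N) : Prop :=
  StratLegal A σ' ∧ ∀ ρ n, IsPlay A ρ n → Compatible A σ' ρ n →
    ∀ j, j ≤ n → Even j → ρ j ∈ g

/-- Winning strategy for the reachability objective `Reach(g)`:
no matter how `P1` keeps moving, a goal node is eventually reached. -/
def WinningReach {N : Type} (A : Arena N) (g : Set N) (σ' : List N → N) : Prop :=
  StratLegal A σ' ∧ ∀ ρ, IsInfPlay A ρ → CompatibleInf A σ' ρ →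
    ∃ j, Even j ∧ ρ j ∈ g

/-! ### The product arena of the two domains -/

def prodArena {PA PB S T : Type} (DA : DynDom PA S) (DB : DynDom PB T) :
    Arena (S × T) where
  u0 := (DA.init, DB.init)
  alpha := fun u v => DA.δ u.1 v.1 ∧ v.2 = u.2
  beta := fun v u => u.1 = v.1 ∧ DB.δ v.2 u.2

/-! ### Mapping specifications -/

/-- Point-wise mapping specification `⋀_{i} □(φ_i → ψ_i)`. -/
def pointwiseSpec {PA PB : Type} {k : ℕ} (φ : Fin k → BForm PA) (ψ : Fin k → BForm PB) :
    LTLf (PA ⊕ PB) :=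
  LTLf.iconj fun i =>
    LTLf.always (LTLf.imp ((φ i).map Sum.inl).toLTLf ((ψ i).map Sum.inr).toLTLf)

/-- Target mapping specification `⋀_{i} (◇φ_i → ◇ψ_i)`. -/
def targetSpec {PA PB : Type} {k : ℕ} (φ : Fin k → BForm PA) (ψ : Fin k → BForm PB) :
    LTLf (PA ⊕ PB) :=
  LTLf.iconj fun i =>
    LTLf.imp (LTLf.ev ((φ i).map Sum.inl).toLTLf) (LTLf.ev ((ψ i).map Sum.inr).toLTLf)

/-! ### The memory-augmented arena for target mappings -/

def memArena {PA PB S T : Type} {k : ℕ} (DA : DynDom PA S) (DB : DynDom PB T)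
    (φ : Fin k → BForm PA) (ψ : Fin k → BForm PB) :
    Arena (S × T × (Fin k → Prop × Prop)) where
  u0 := (DA.init, DB.init,
    fun i => ((φ i).sat (DA.label DA.init), (ψ i).sat (DB.label DB.init)))
  alpha := fun u v => DA.δ u.1 v.1 ∧ v.2.1 = u.2.1 ∧
    v.2.2 = fun i => ((φ i).sat (DA.label v.1) ∨ (u.2.2 i).1, (u.2.2 i).2)
  beta := fun v u => u.1 = v.1 ∧ DB.δ v.2.1 u.2.1 ∧
    u.2.2 = fun i => ((v.2.2 i).1, (ψ i).sat (DB.label u.2.1) ∨ (v.2.2 i).2)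

/-- `g`: for every `i`, `c_i = 0` or `d_i = 1`. -/
def memGoal {S T : Type} {k : ℕ} : Set (S × T × (Fin k → Prop × Prop)) :=
  {u | ∀ i, (u.2.2 i).1 → (u.2.2 i).2}

/-! ### The DFA-product arena for general LTLf mappings -/

/-- The word `π 0 … π n` as a list. -/
def wordOf {P : Type} (π : ℕ → Set P) (n : ℕ) : List (Set P) := (List.range (n + 1)).map π

def dfaArena {PA PB S T Q : Type} (DA : DynDom PA S) (DB : DynDom PB T)
    (F : DFA (Set (PA ⊕ PB)) Q) : Arena (S × T × Q) where
  u0 := (DA.init, DB.init, F.step F.start (jset (DA.label DA.init) (DB.label DB.init)))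
  alpha := fun u v => DA.δ u.1 v.1 ∧ v.2.1 = u.2.1 ∧ v.2.2 = u.2.2
  beta := fun v u => u.1 = v.1 ∧ DB.δ v.2.1 u.2.1 ∧
    u.2.2 = F.step v.2.2 (jset (DA.label v.1) (DB.label u.2.1))

def dfaGoal {S T α Q : Type} (F : DFA α Q) : Set (S × T × Q) :=
  {u | u.2.2 ∈ F.accept}

/-- The set `g` of safe nodes: `λ^A(s) ∪ λ^B(t) ⊨ ⋀_{i=1}^k (φ_i → ψ_i)`. -/
def pointwiseGoal {PA PB S T : Type} {k : ℕ} (DA : DynDom PA S) (DB : DynDom PB T)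
    (φ : Fin k → BForm PA) (ψ : Fin k → BForm PB) : Set (S × T) :=
  {u | ∀ i, (BForm.imp ((φ i).map Sum.inl) ((ψ i).map Sum.inr)).sat
    (jset (DA.label u.1) (DB.label u.2))}

/-! Winning the safety game on the product arena amounts to agent `B` keeping every pair of
current states inside `g`. A `B`-strategy `σ` yields a Player-2 strategy that copies the `S`-part of
the last node and answers `σ` on the `S`-parts of the visited `V`-nodes. Conversely, a Player-2
strategy yields a `B`-strategy by replaying the game along the given `A`-trace. For the point-wise
specification the goal set `g` is exactly what `□` asks at every position of the joint trace. -/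

namespace LTLf

variable {P : Type} (π : ℕ → Set P) (n : ℕ)

theorem sat_toLTLf (b : BForm P) (j : ℕ) : sat π n j b.toLTLf ↔ b.sat (π j) := by
  induction b with
  | tt => exact Iff.rfl
  | atom p => exact Iff.rfl
  | neg φ ih => exact not_congr ih
  | conj φ ψ ih₁ ih₂ => exact and_congr ih₁ ih₂

theorem sat_imp (a b : LTLf P) (i : ℕ) :
    sat π n i (imp a b) ↔ (sat π n i a → sat π n i b) := by
  simp only [imp, disj, sat]
  tauto

theorem sat_always (χ : LTLf P) (i : ℕ) :
    sat π n i (always χ) ↔ ∀ j, i ≤ j → j ≤ n → sat π n j χ := by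
  simp only [always, ev, sat, implies_true, and_true, not_exists, not_and, not_not]

theorem sat_foldr_conj (l : List (LTLf P)) (i : ℕ) :
    sat π n i (l.foldr .conj .tt) ↔ ∀ χ ∈ l, sat π n i χ := by
  induction l with
  | nil => simp [sat]
  | cons χ l ih => simp [sat, ih]

theorem sat_iconj {k : ℕ} (f : Fin k → LTLf P) (i : ℕ) :
    sat π n i (iconj f) ↔ ∀ j, sat π n i (f j) := by
  simp [iconj, sat_foldr_conj]

end LTLf

theorem BForm.sat_imp {P : Type} (a b : BForm P) (X : Set P) :
    (BForm.imp a b).sat X ↔ (a.sat X → b.sat X) := by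
  simp only [BForm.imp, BForm.sat]
  tauto

theorem sat_pointwiseSpec {PA PB : Type} {k : ℕ} (φ : Fin k → BForm PA)
    (ψ : Fin k → BForm PB) (π : ℕ → Set (PA ⊕ PB)) (n : ℕ) :
    LTLf.sat π n 0 (pointwiseSpec φ ψ) ↔
      ∀ j ≤ n, ∀ i, (BForm.imp ((φ i).map Sum.inl) ((ψ i).map Sum.inr)).sat (π j) := by
  simp only [pointwiseSpec, LTLf.sat_iconj, LTLf.sat_always, LTLf.sat_imp, LTLf.sat_toLTLf,
    BForm.sat_imp, Nat.zero_le, true_implies]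
  exact ⟨fun h j hj i => h i j hj, fun h i j hj => h j hj i⟩

theorem IsPrePlay.succ {N : Type} {A : Arena N} {ρ : ℕ → N} {n : ℕ} (h : IsPrePlay A ρ n)
    (hα : Even n → A.alpha (ρ n) (ρ (n + 1))) (hβ : ¬ Even n → A.beta (ρ n) (ρ (n + 1))) :
    IsPrePlay A ρ (n + 1) := by
  refine ⟨h.1, fun i hi => ?_⟩
  rcases Nat.lt_succ_iff_lt_or_eq.mp hi with hi | rfl
  · exact h.2 i hi
  · exact ⟨hα, hβ⟩

theorem StratLegal.isPrePlay_succ {N : Type} {A : Arena N} {σ' : List N → N} {ρ : ℕ → N}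
    {n : ℕ} (hσ' : StratLegal A σ') (h : IsPrePlay A ρ n) (hn : ¬ Even n)
    (hc : Compatible A σ' ρ (n + 1)) : IsPrePlay A ρ (n + 1) := by
  refine h.succ (fun he => absurd he hn) fun _ => ?_
  rw [hc n (Nat.lt_succ_self n) hn]
  exact hσ' ρ n hn h fun i hi => hc i (by omega)

section ProductGame

variable {PA PB S T : Type} {DA : DynDom PA S} {DB : DynDom PB T}

def playTraceA (uA : S) (ρ : ℕ → S × T) : ℕ → S
  | 0 => uA
  | i + 1 => (ρ (2 * i + 1)).1

theorem cons_map_fst_vlist (uA : S) (ρ : ℕ → S × T) (i : ℕ) :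
    uA :: (vlist ρ i).map Prod.fst = pref (playTraceA uA ρ) ((i + 1) / 2) := by
  simp only [vlist, pref, List.range_succ_eq_map, List.map_cons, List.map_map]
  rfl

namespace IsPrePlay

variable {ρ : ℕ → S × T} {n : ℕ} (h : IsPrePlay (prodArena DA DB) ρ n)
include h

theorem prodArena_alpha {j : ℕ} (hj : 2 * j < n) :
    DA.δ (ρ (2 * j)).1 (ρ (2 * j + 1)).1 ∧ (ρ (2 * j + 1)).2 = (ρ (2 * j)).2 :=
  (h.2 _ hj).1 (even_two_mul j)

theorem prodArena_beta {j : ℕ} (hj : 2 * j + 1 < n) :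
    (ρ (2 * j + 2)).1 = (ρ (2 * j + 1)).1 ∧ DB.δ (ρ (2 * j + 1)).2 (ρ (2 * j + 2)).2 :=
  (h.2 _ hj).2 (Nat.not_even_iff_odd.mpr (odd_two_mul_add_one j))

theorem fst_two_mul {j : ℕ} (hj : 2 * j ≤ n) : (ρ (2 * j)).1 = playTraceA DA.init ρ j := by
  cases j with
  | zero => exact congrArg Prod.fst h.1
  | succ j => exact (h.prodArena_beta (by omega)).1

theorem isTrace_playTraceA {m : ℕ} (hm : 2 * m ≤ n + 1) :
    IsTrace DA (playTraceA DA.init ρ) m :=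
  ⟨rfl, fun j hj => h.fst_two_mul (j := j) (by omega) ▸ (h.prodArena_alpha (j := j) (by omega)).1⟩

theorem isTrace_snd_two_mul {m : ℕ} (hm : 2 * m ≤ n) :
    IsTrace DB (fun j => (ρ (2 * j)).2) m :=
  ⟨congrArg Prod.snd h.1, fun j hj => by
    have hβ := (h.prodArena_beta (j := j) (by omega)).2
    rwa [(h.prodArena_alpha (j := j) (by omega)).2] at hβ⟩

end IsPrePlay

def IsSafeStrategy (DA : DynDom PA S) (DB : DynDom PB T) (g : Set (S × T))
    (σ : List S → T) : Prop :=
  Executable DA DB σ ∧ ∀ τ n, IsTrace DA τ n → ∀ j ≤ n, (τ j, induced σ τ j) ∈ g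

theorem isSolutionA_pointwiseSpec_iff {k : ℕ} (φ : Fin k → BForm PA) (ψ : Fin k → BForm PB)
    (σ : List S → T) :
    IsSolutionA DA DB (pointwiseSpec φ ψ) σ ↔
      IsSafeStrategy DA DB (pointwiseGoal DA DB φ ψ) σ := by
  simp only [IsSolutionA, sat_pointwiseSpec]
  rfl

section ToGameStrategy

def toGameStrategy (uA : S) (σ : List S → T) (L : List (S × T)) : S × T :=
  let A := uA :: L.map Prod.fst
  (A.getLast (List.cons_ne_nil _ _), σ A)

theorem toGameStrategy_vlist (uA : S) (σ : List S → T) (ρ : ℕ → S × T) (i : ℕ) :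
    toGameStrategy uA σ (vlist ρ i) =
      (playTraceA uA ρ ((i + 1) / 2), induced σ (playTraceA uA ρ) ((i + 1) / 2)) := by
  simp only [toGameStrategy, cons_map_fst_vlist, induced, pref, List.getLast_map,
    List.getLast_range, Nat.add_sub_cancel]

theorem IsPrePlay.eq_of_compatible_toGameStrategy {σ : List S → T} {ρ : ℕ → S × T} {n : ℕ}
    (h : IsPrePlay (prodArena DA DB) ρ n) (hinit : σ [DA.init] = DB.init)
    (hc : Compatible (prodArena DA DB) (toGameStrategy DA.init σ) ρ n) {j : ℕ}
    (hj : 2 * j ≤ n) :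
    ρ (2 * j) = (playTraceA DA.init ρ j, induced σ (playTraceA DA.init ρ) j) := by
  cases j with
  | zero => exact h.1.trans (Prod.ext rfl hinit.symm)
  | succ j =>
    rw [show 2 * (j + 1) = 2 * j + 1 + 1 by ring,
      hc _ (by omega) (Nat.not_even_iff_odd.mpr (odd_two_mul_add_one j)), toGameStrategy_vlist]
    congr 3 <;> omega

theorem IsSafeStrategy.winningSafe_toGameStrategy {g : Set (S × T)} {σ : List S → T}
    (hσ : IsSafeStrategy DA DB g σ) :
    WinningSafe (prodArena DA DB) g (toGameStrategy DA.init σ) := by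
  obtain ⟨⟨hinit, hexec⟩, hsafe⟩ := hσ
  constructor
  · intro ρ n hn h hc
    obtain ⟨q, rfl⟩ : ∃ q, n = 2 * q + 1 := Nat.not_even_iff_odd.mp hn
    have hτ := hexec _ _ (h.isTrace_playTraceA (m := q + 1) (by omega))
    have hq := h.eq_of_compatible_toGameStrategy hinit hc (j := q) (by omega)
    rw [toGameStrategy_vlist, show (2 * q + 1 + 1) / 2 = q + 1 by omega]
    refine ⟨rfl, ?_⟩
    rw [(h.prodArena_alpha (by omega)).2, hq]
    exact hτ.2 q (Nat.lt_succ_self q)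
  · rintro ρ _ ⟨⟨m, rfl⟩, h⟩ hc _ hj ⟨j, rfl⟩
    rw [← two_mul] at hj ⊢
    rw [h.eq_of_compatible_toGameStrategy hinit hc hj]
    exact hsafe _ m (h.isTrace_playTraceA (by omega)) j (by omega)

end ToGameStrategy

section ToAgentStrategy

variable (σ' : List (S × T) → S × T) (u₀ : S × T) (τ : ℕ → S)

/-- The `P1` node after `j` rounds and the `V`-nodes visited so far, when Player 1 follows `τ`
and Player 2 plays `σ'` from `u₀`. -/
def simulate : ℕ → (S × T) × List (S × T)
  | 0 => (u₀, [])
  | j + 1 =>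
    let H := (simulate j).2 ++ [(τ (j + 1), (simulate j).1.2)]
    (σ' H, H)

def simPlay (m : ℕ) : S × T :=
  if Even m then (simulate σ' u₀ τ (m / 2)).1
  else (τ ((m + 1) / 2), (simulate σ' u₀ τ (m / 2)).1.2)

/-- The default `u₀.1` of `getD` is never read, since `induced` only feeds in prefixes. -/
def toAgentStrategy (L : List S) : T :=
  (simulate σ' u₀ (fun i => L.getD i u₀.1) (L.length - 1)).1.2

theorem simPlay_two_mul (j : ℕ) : simPlay σ' u₀ τ (2 * j) = (simulate σ' u₀ τ j).1 := by
  simp [simPlay]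

theorem simPlay_two_mul_add_one (j : ℕ) :
    simPlay σ' u₀ τ (2 * j + 1) = (τ (j + 1), (simulate σ' u₀ τ j).1.2) := by
  have hodd : ¬ Even (2 * j + 1) := Nat.not_even_iff_odd.mpr (odd_two_mul_add_one j)
  simp only [simPlay, hodd, if_false, show (2 * j + 1 + 1) / 2 = j + 1 by omega,
    show (2 * j + 1) / 2 = j by omega]

theorem vlist_simPlay (m : ℕ) :
    vlist (simPlay σ' u₀ τ) m = (simulate σ' u₀ τ ((m + 1) / 2)).2 := by
  rw [vlist]
  induction (m + 1) / 2 with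
  | zero => rfl
  | succ j ih =>
    rw [List.range_succ, List.map_append, ih]
    simp [simulate, simPlay_two_mul_add_one]

theorem playTraceA_simPlay {uA : S} (h0 : τ 0 = uA) : playTraceA uA (simPlay σ' u₀ τ) = τ := by
  ext i
  cases i with
  | zero => exact h0.symm
  | succ i => simp [playTraceA, simPlay_two_mul_add_one]

theorem compatible_simPlay {A : Arena (S × T)} (n : ℕ) :
    Compatible A σ' (simPlay σ' u₀ τ) n := by
  intro i _ hi
  obtain ⟨j, rfl⟩ := Nat.not_even_iff_odd.mp hi
  rw [vlist_simPlay, show (2 * j + 1 + 1) / 2 = j + 1 by omega,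
    show 2 * j + 1 + 1 = 2 * (j + 1) by ring, simPlay_two_mul]
  rfl

theorem simulate_congr {τ τ' : ℕ → S} {j : ℕ} (h : ∀ i ≤ j, τ i = τ' i) :
    simulate σ' u₀ τ j = simulate σ' u₀ τ' j := by
  induction j with
  | zero => rfl
  | succ j ih =>
    simp only [simulate, ih fun i hi => h i (Nat.le_succ_of_le hi), h (j + 1) le_rfl]

theorem induced_toAgentStrategy (i : ℕ) :
    induced (toAgentStrategy σ' u₀) τ i = (simPlay σ' u₀ τ (2 * i)).2 := by
  have hlen : (pref τ i).length = i + 1 := by simp [pref]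
  rw [simPlay_two_mul, induced, toAgentStrategy, hlen, Nat.add_sub_cancel,
    simulate_congr σ' u₀ fun m hm => ?_]
  rw [List.getD_eq_getElem _ _ (by omega)]
  simp [pref]

variable {σ' τ}

theorem StratLegal.isPrePlay_simPlay (hσ' : StratLegal (prodArena DA DB) σ') {n : ℕ}
    (hτ : IsTrace DA τ n) {j : ℕ} (hj : j ≤ n) :
    IsPrePlay (prodArena DA DB) (simPlay σ' (DA.init, DB.init) τ) (2 * j) := by
  induction j with
  | zero => exact ⟨simPlay_two_mul σ' _ τ 0, fun i hi => absurd hi (Nat.not_lt_zero i)⟩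
  | succ j ih =>
    have h := ih (by omega)
    have hfst : (simPlay σ' (DA.init, DB.init) τ (2 * j)).1 = τ j := by
      rw [h.fst_two_mul le_rfl, playTraceA_simPlay σ' _ τ hτ.1]
    have hα : (prodArena DA DB).alpha (simPlay σ' (DA.init, DB.init) τ (2 * j))
        (simPlay σ' (DA.init, DB.init) τ (2 * j + 1)) := by
      rw [simPlay_two_mul_add_one, ← simPlay_two_mul σ' _ τ j]
      exact ⟨hfst ▸ hτ.2 j (by omega), rfl⟩
    have h' := h.succ (fun _ => hα) fun he => absurd (even_two_mul j) he
    exact hσ'.isPrePlay_succ h' (Nat.not_even_iff_odd.mpr (odd_two_mul_add_one j))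
      (compatible_simPlay σ' _ τ _)

theorem WinningSafe.isSafeStrategy_toAgentStrategy {g : Set (S × T)}
    (hσ' : WinningSafe (prodArena DA DB) g σ') :
    IsSafeStrategy DA DB g (toAgentStrategy σ' (DA.init, DB.init)) := by
  have hinduced (τ : ℕ → S) : induced (toAgentStrategy σ' (DA.init, DB.init)) τ =
      fun j => (simPlay σ' (DA.init, DB.init) τ (2 * j)).2 :=
    funext (induced_toAgentStrategy σ' _ τ)
  refine ⟨⟨rfl, fun τ n hτ => ?_⟩, fun τ n hτ j hj => ?_⟩
  · rw [hinduced]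
    exact (hσ'.1.isPrePlay_simPlay hτ le_rfl).isTrace_snd_two_mul le_rfl
  · have h := hσ'.1.isPrePlay_simPlay hτ le_rfl
    have hg := hσ'.2 _ _ ⟨even_two_mul n, h⟩ (compatible_simPlay σ' _ τ _) (2 * j)
      (by omega) (even_two_mul j)
    have hfst := h.fst_two_mul (j := j) (by omega)
    rw [playTraceA_simPlay σ' _ τ hτ.1] at hfst
    rwa [hinduced, ← hfst]

end ToAgentStrategy

theorem exists_isSafeStrategy_iff_exists_winningSafe (g : Set (S × T)) :
    (∃ σ, IsSafeStrategy DA DB g σ) ↔ ∃ σ', WinningSafe (prodArena DA DB) g σ' :=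
  ⟨fun ⟨_, hσ⟩ => ⟨_, hσ.winningSafe_toGameStrategy⟩,
    fun ⟨_, hσ'⟩ => ⟨_, hσ'.isSafeStrategy_toAgentStrategy⟩⟩

end ProductGame

theorem mbsd_pointwise_iff_safety_game_general
    {PA PB S T : Type} {k : ℕ}
    (DA : DynDom PA S) (DB : DynDom PB T)
    (φ : Fin k → BForm PA) (ψ : Fin k → BForm PB) :
    (∃ σ : List S → T, IsSolutionA DA DB (pointwiseSpec φ ψ) σ) ↔
      (∃ σ' : List (S × T) → S × T,
        WinningSafe (prodArena DA DB) (pointwiseGoal DA DB φ ψ) σ') := by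
  simp only [isSolutionA_pointwiseSpec_iff]
  exact exists_isSafeStrategy_iff_exists_winningSafe _

/-- the MBSD instance with point-wise mapping specification
`⋀_{i=1}^k □(φ_i → ψ_i)` and stop agent `A` has a solution iff Player 2 has a winning
strategy in the associated safety game on the product arena. -/
theorem mbsd_pointwise_iff_safety_game
    {PA PB S T : Type} [Fintype PA] [Fintype PB] [Fintype S] [Fintype T] {k : ℕ}
    (DA : DynDom PA S) (DB : DynDom PB T)
    (hserA : ∀ s, ∃ s', DA.δ s s') (hserB : ∀ t, ∃ t', DB.δ t t')
    (φ : Fin k → BForm PA) (ψ : Fin k → BForm PB) :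
    (∃ σ : List S → T, IsSolutionA DA DB (pointwiseSpec φ ψ) σ) ↔
      (∃ σ' : List (S × T) → S × T,
        WinningSafe (prodArena DA DB) (pointwiseGoal DA DB φ ψ) σ') :=
  mbsd_pointwise_iff_safety_game_general DA DB φ ψ
end

section
/- Let P = (D_A, D_B, Φ, A) be an MBSD instance and let 𝒜 be the arena with U = V = S × T, u0 = (s0, t0), α = {((s,t),(s',t)) : (s,s') ∈ δ^A}, β = {((s,t),(s,t')) : (t,t') ∈ δ^B}. For every executable strategy σ for P there exists a P2 strategy σ' on 𝒜 (defined by σ'(ρ ∘ (s', t)) = (s', σ(τ)) where τ is the trace of D_A formed by the A-components chosen by P1 along the play) such that: a sequence ρ is a play of 𝒜 compatible with σ' if and only if there exists a trace τ^A = s0 s1 ... sn of D_A such that, writing σ~(τ^A) = t0 t1 ... tn, ρ = (s0,t0)(s1,t0)(s1,t1)(s2,t1)...(sn,t_{n-1})(sn,tn). -/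
/-!
Player 2 copies Player 1's last `A`-move and answers with `σ` applied to the `A`-trace read
off the `V`-nodes so far. Since every move of the product arena changes only one component,
the `A`-components of a play form a trace `τ` of `D_A` and, by induction along the play, its
`B`-components are the values of `σ` on the prefixes of `τ`; conversely, executability of `σ`
makes the interleaving of `τ` and `σ~(τ)` a legal play.
-/

section Arena

variable {N : Type}

lemma vlist_two_mul_add_one (ρ : ℕ → N) (k : ℕ) :
    vlist ρ (2 * k + 1) = (List.range (k + 1)).map fun j => ρ (2 * j + 1) := by
  rw [vlist, show (2 * k + 1 + 1) / 2 = k + 1 by omega]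

lemma isPlay_iff (A : Arena N) (ρ : ℕ → N) (n : ℕ) :
    IsPlay A ρ n ↔ ∃ m, n = 2 * m ∧ ρ 0 = A.u0 ∧
      ∀ j < m, A.alpha (ρ (2 * j)) (ρ (2 * j + 1)) ∧ A.beta (ρ (2 * j + 1)) (ρ (2 * j + 2)) := by
  constructor
  · rintro ⟨⟨m, rfl⟩, h0, hstep⟩
    refine ⟨m, by ring, h0, fun j hj => ⟨?_, ?_⟩⟩
    · exact (hstep (2 * j) (by omega)).1 (even_two_mul j)
    · exact (hstep (2 * j + 1) (by omega)).2 (by simp [parity_simps])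
  · rintro ⟨m, rfl, h0, hstep⟩
    refine ⟨even_two_mul m, h0, fun i hi => ?_⟩
    obtain ⟨j, rfl | rfl⟩ := Nat.even_or_odd' i
    · exact ⟨fun _ => (hstep j (by omega)).1, fun h => absurd (even_two_mul j) h⟩
    · exact ⟨fun h => absurd h (by simp [parity_simps]), fun _ => (hstep j (by omega)).2⟩

lemma compatible_two_mul_iff (A : Arena N) (σ' : List N → N) (ρ : ℕ → N) (m : ℕ) :
    Compatible A σ' ρ (2 * m) ↔
      ∀ j < m, ρ (2 * j + 2) = σ' ((List.range (j + 1)).map fun i => ρ (2 * i + 1)) := by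
  constructor
  · intro h j hj
    simpa [vlist_two_mul_add_one] using h (2 * j + 1) (by omega) (by simp [parity_simps])
  · intro h i hi hodd
    obtain ⟨j, rfl⟩ := Nat.not_even_iff_odd.mp hodd
    simpa [vlist_two_mul_add_one] using h j (by omega)

end Arena

section Strategy

variable {PA PB S T : Type}

def gameStrategy (s₀ : S) (σ : List S → T) (l : List (S × T)) : S × T :=
  ((l.map Prod.fst).getLastD s₀, σ (s₀ :: l.map Prod.fst))

lemma pref_succ (τ : ℕ → S) (j : ℕ) :
    pref τ (j + 1) = τ 0 :: (List.range (j + 1)).map fun i => τ (i + 1) := by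
  rw [pref, List.range_succ_eq_map, List.map_cons, List.map_map]
  rfl

lemma gameStrategy_eq_induced (σ : List S → T) (τ : ℕ → S) (v : ℕ → S × T) (j : ℕ)
    (hv : ∀ i ≤ j, (v i).1 = τ (i + 1)) :
    gameStrategy (τ 0) σ ((List.range (j + 1)).map v) = (τ (j + 1), induced σ τ (j + 1)) := by
  have hfst : ((List.range (j + 1)).map v).map Prod.fst =
      (List.range (j + 1)).map fun i => τ (i + 1) := by
    rw [List.map_map]
    exact List.map_congr_left fun i hi => hv i (Nat.lt_succ_iff.mp (List.mem_range.mp hi))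
  rw [gameStrategy, hfst, induced, pref_succ, List.range_succ, List.map_append]
  simp only [List.map_cons, List.map_nil, List.getLastD_concat]

variable {DA : DynDom PA S} {DB : DynDom PB T} {σ : List S → T} {ρ : ℕ → S × T} {m : ℕ}

lemma exists_trace_of_compatible_play (hinit : σ [DA.init] = DB.init)
    (h0 : ρ 0 = (prodArena DA DB).u0)
    (hstep : ∀ j < m, (prodArena DA DB).alpha (ρ (2 * j)) (ρ (2 * j + 1)) ∧
      (prodArena DA DB).beta (ρ (2 * j + 1)) (ρ (2 * j + 2)))
    (hcomp : ∀ j < m, ρ (2 * j + 2) =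
      gameStrategy DA.init σ ((List.range (j + 1)).map fun i => ρ (2 * i + 1))) :
    ∃ τ : ℕ → S, IsTrace DA τ m ∧
      (∀ j, j ≤ m → ρ (2 * j) = (τ j, induced σ τ j)) ∧
      (∀ j, j < m → ρ (2 * j + 1) = (τ (j + 1), induced σ τ j)) := by
  set τ : ℕ → S := fun j => (ρ (2 * j)).1
  have hτ0 : τ 0 = DA.init := congrArg Prod.fst h0
  have hodd_fst : ∀ j < m, (ρ (2 * j + 1)).1 = τ (j + 1) := fun j hj => (hstep j hj).2.1.symm
  have heven : ∀ j ≤ m, ρ (2 * j) = (τ j, induced σ τ j) := by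
    rintro (_ | j) hj
    · show ρ 0 = (τ 0, σ [τ 0])
      rw [hτ0, hinit, h0]
      rfl
    · rw [show 2 * (j + 1) = 2 * j + 2 by ring, hcomp j (by omega), ← hτ0]
      exact gameStrategy_eq_induced σ τ _ j fun i hi => hodd_fst i (by omega)
  refine ⟨τ, ⟨hτ0, fun i hi => ?_⟩, heven, fun j hj => Prod.ext (hodd_fst j hj) ?_⟩
  · rw [← hodd_fst i hi]
    exact (hstep i hi).1.1
  · rw [(hstep j hj).1.2, heven j hj.le]

lemma compatible_play_of_trace (hσ : Executable DA DB σ) {τ : ℕ → S} (htr : IsTrace DA τ m)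
    (heven : ∀ j, j ≤ m → ρ (2 * j) = (τ j, induced σ τ j))
    (hodd : ∀ j, j < m → ρ (2 * j + 1) = (τ (j + 1), induced σ τ j)) :
    ρ 0 = (prodArena DA DB).u0 ∧
    (∀ j < m, (prodArena DA DB).alpha (ρ (2 * j)) (ρ (2 * j + 1)) ∧
      (prodArena DA DB).beta (ρ (2 * j + 1)) (ρ (2 * j + 2))) ∧
    ∀ j < m, ρ (2 * j + 2) =
      gameStrategy DA.init σ ((List.range (j + 1)).map fun i => ρ (2 * i + 1)) := by
  have htrB := hσ.2 τ m htr
  have heven_succ : ∀ j < m, ρ (2 * j + 2) = (τ (j + 1), induced σ τ (j + 1)) :=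
    fun j hj => heven (j + 1) hj
  refine ⟨?_, fun j hj => ⟨?_, ?_⟩, fun j hj => ?_⟩
  · rw [heven 0 m.zero_le, htr.1, htrB.1]
    rfl
  · rw [heven j hj.le, hodd j hj]
    exact ⟨htr.2 j hj, rfl⟩
  · rw [hodd j hj, heven_succ j hj]
    exact ⟨rfl, htrB.2 j hj⟩
  · rw [heven_succ j hj, ← htr.1]
    exact (gameStrategy_eq_induced σ τ _ j fun i hi => by rw [hodd i (by omega)]).symm

end Strategy

theorem executable_strategy_to_game_strategy_general
    {PA PB S T : Type}
    (DA : DynDom PA S) (DB : DynDom PB T)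
    (σ : List S → T) (hσ : Executable DA DB σ) :
    ∃ σ' : List (S × T) → S × T,
      ∀ (ρ : ℕ → S × T) (n : ℕ),
        (IsPlay (prodArena DA DB) ρ n ∧ Compatible (prodArena DA DB) σ' ρ n) ↔
        (∃ (τ : ℕ → S) (m : ℕ), n = 2 * m ∧ IsTrace DA τ m ∧
          (∀ j, j ≤ m → ρ (2 * j) = (τ j, induced σ τ j)) ∧
          (∀ j, j < m → ρ (2 * j + 1) = (τ (j + 1), induced σ τ j))) := by
  refine ⟨gameStrategy DA.init σ, fun ρ n => ?_⟩
  rw [isPlay_iff]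
  constructor
  · rintro ⟨⟨m, rfl, h0, hstep⟩, hcomp⟩
    obtain ⟨τ, hτ⟩ := exists_trace_of_compatible_play hσ.1 h0 hstep
      ((compatible_two_mul_iff _ _ _ m).1 hcomp)
    exact ⟨τ, m, rfl, hτ⟩
  · rintro ⟨τ, m, rfl, htr, heven, hodd⟩
    obtain ⟨h0, hstep, hcomp⟩ := compatible_play_of_trace hσ htr heven hodd
    exact ⟨⟨m, rfl, h0, hstep⟩, (compatible_two_mul_iff _ _ _ m).2 hcomp⟩

/-- from an executable strategy `σ` for the MBSD instance one obtains a
`P2` strategy `σ'` on the product arena such that the plays compatible with `σ'` are exactly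
the sequences `(s_0,t_0)(s_1,t_0)(s_1,t_1)…(s_n,t_{n-1})(s_n,t_n)` arising from traces
`τ^A = s_0…s_n` of `D_A` together with the induced traces `σ~(τ^A) = t_0…t_n`. -/
theorem executable_strategy_to_game_strategy
    {PA PB S T : Type} [Fintype PA] [Fintype PB] [Fintype S] [Fintype T]
    (DA : DynDom PA S) (DB : DynDom PB T)
    (σ : List S → T) (hσ : Executable DA DB σ) :
    ∃ σ' : List (S × T) → S × T,
      ∀ (ρ : ℕ → S × T) (n : ℕ),
        (IsPlay (prodArena DA DB) ρ n ∧ Compatible (prodArena DA DB) σ' ρ n) ↔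
        (∃ (τ : ℕ → S) (m : ℕ), n = 2 * m ∧ IsTrace DA τ m ∧
          (∀ j, j ≤ m → ρ (2 * j) = (τ j, induced σ τ j)) ∧
          (∀ j, j < m → ρ (2 * j + 1) = (τ (j + 1), induced σ τ j))) :=
  executable_strategy_to_game_strategy_general DA DB σ hσ
end
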